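/- Let X_t be the number of ones in the biased majority dynamics on the cycle C_n, with bias α ∈ (0,1]. Conditioned on the configuration at time t-1 having k ones, with B_i, S_i defined as the nodes of color i with two resp. one neighbor of the opposite color, the one-step transition probabilities are: decrease by one with probability (1-α)(|B_1| + |S_1|/2)/n, increase by one with probability α(n-k)/n + (1-α)(|B_0| + |S_0|/2)/n, and stay with the remaining probability; consequently E[X_t | X_{t-1} = k] = k + α(n-k)/n. -/

import Mathlib

/-!
Only the updated node changes colour, so the number of ones moves by at most one: it rises
when a `0`-node turns to `1` (probability `p u = α + (1 - α) maj u`) and falls when a `1`-node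
turns to `0` (probability `1 - p u`). On the cycle, `maj u` is the mean of the two neighbours'
bits, so `[c u = 1] (1 - maj u)` and `[c u = 0] maj u` are the indicator of `B_i` plus half
that of `S_i`, for `i = 1` and `i = 0` respectively. Every node is a neighbour exactly twice,
hence `∑ u, maj u = k`; this is the identity `|B₀| + |S₀|/2 = |B₁| + |S₁|/2` in disguise, and
it gives `E = k + (∑ u, (p u - c u)) / n = k + α (n - k) / n`.
-/

open Finset
open scoped Classical

/-- Probability that the majority rule outputs `1` at node `u` in configuration
`c` (majority of neighbors, ties broken uniformly). -/
noncomputable def majorityProb {V : Type*} [Fintype V] (G : SimpleGraph V)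
    (c : V → Bool) (u : V) : ℝ :=
  if G.degree u < 2 * ((G.neighborFinset u).filter (fun v => c v = true)).card then 1
  else if 2 * ((G.neighborFinset u).filter (fun v => c v = true)).card = G.degree u
  then 1 / 2 else 0

/-- One-step transition probability of the biased majority dynamics. -/
noncomputable def stepProb {V : Type*} [Fintype V] (G : SimpleGraph V) (α : ℝ)
    (c c' : V → Bool) : ℝ :=
  (1 / Fintype.card V) *
    ∑ u : V,
      ((if c' = Function.update c u true then α + (1 - α) * majorityProb G c u else 0) +
        (if c' = Function.update c u false
          then 1 - (α + (1 - α) * majorityProb G c u) else 0))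

/-- The cycle on `n` nodes, with vertex set `ZMod n` and edges `{u, u+1}`. -/
def cycleGraph (n : ℕ) : SimpleGraph (ZMod n) :=
  SimpleGraph.fromRel (fun u v => v = u + 1)

/-- Number of ones in a configuration. -/
noncomputable def onesCount {n : ℕ} [NeZero n] (c : ZMod n → Bool) : ℕ :=
  (univ.filter (fun v => c v = true)).card

open Function

theorem sum_mul_stepProb {V : Type*} [Fintype V] [DecidableEq V] (G : SimpleGraph V) (α : ℝ)
    (c : V → Bool) (f : (V → Bool) → ℝ) :
    ∑ c', f c' * stepProb G α c c' =
      1 / Fintype.card V * ∑ u, (f (update c u true) * (α + (1 - α) * majorityProb G c u) +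
        f (update c u false) * (1 - (α + (1 - α) * majorityProb G c u))) := by
  -- `stepProb` was elaborated with the classical `DecidableEq V`.
  obtain rfl : ‹DecidableEq V› = fun a b => Classical.propDecidable (a = b) :=
    Subsingleton.elim _ _
  simp only [stepProb, mul_sum, mul_add, mul_ite, mul_zero]
  rw [sum_comm]
  refine sum_congr rfl fun u _ => ?_
  simp only [sum_add_distrib, sum_ite_eq', mem_univ, if_true]
  ring

theorem sum_filter_stepProb {V : Type*} [Fintype V] [DecidableEq V] (G : SimpleGraph V) (α : ℝ)
    (c : V → Bool) (p : (V → Bool) → Prop) [DecidablePred p] :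
    ∑ c' ∈ univ.filter p, stepProb G α c c' =
      1 / Fintype.card V * ∑ u,
        ((if p (update c u true) then α + (1 - α) * majorityProb G c u else 0) +
          (if p (update c u false) then 1 - (α + (1 - α) * majorityProb G c u) else 0)) := by
  rw [sum_filter]
  simpa only [boole_mul] using sum_mul_stepProb G α c fun c' => if p c' then 1 else 0

theorem card_filter_eq_true_eq_sum_toNat {ι : Type*} (c : ι → Bool) (s : Finset ι) :
    #(s.filter (c · = true)) = ∑ u ∈ s, (c u).toNat := by
  rw [card_filter]
  exact sum_congr rfl fun u _ => by cases c u <;> rfl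

section Cycle

variable {n : ℕ} [NeZero n]

theorem onesCount_eq_sum_toNat (c : ZMod n → Bool) : onesCount c = ∑ u, (c u).toNat :=
  card_filter_eq_true_eq_sum_toNat c univ

theorem cast_onesCount (c : ZMod n → Bool) :
    (onesCount c : ℝ) = ∑ u, ((c u).toNat : ℝ) := by
  rw [onesCount_eq_sum_toNat, Nat.cast_sum]

theorem onesCount_update_add (c : ZMod n → Bool) (u : ZMod n) (b : Bool) :
    onesCount (update c u b) + (c u).toNat = onesCount c + b.toNat := by
  simp only [onesCount, card_filter_eq_true_eq_sum_toNat, ← add_sum_erase _ _ (mem_univ u),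
    update_self]
  rw [sum_congr rfl fun v hv => by rw [update_of_ne (ne_of_mem_erase hv)]]
  ring

omit [NeZero n] in
theorem add_one_ne_sub_one (hn : 3 ≤ n) (u : ZMod n) : u + 1 ≠ u - 1 := by
  intro h
  have h2 : ((2 : ℕ) : ZMod n) = 0 := by push_cast; linear_combination h
  have := Nat.le_of_dvd two_pos ((ZMod.natCast_eq_zero_iff _ _).mp h2)
  omega

theorem cycleGraph_neighborFinset (hn : 3 ≤ n) (u : ZMod n) :
    (cycleGraph n).neighborFinset u = {u + 1, u - 1} := by
  ext v
  rw [SimpleGraph.mem_neighborFinset]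
  simp only [cycleGraph, SimpleGraph.fromRel_adj, mem_insert, mem_singleton]
  have : Fact (1 < n) := ⟨by omega⟩
  constructor
  · rintro ⟨-, h | rfl⟩
    · exact .inl h
    · exact .inr (add_sub_cancel_right v 1).symm
  · rintro (rfl | rfl)
    · exact ⟨(succ_ne_self u).symm, .inl rfl⟩
    · exact ⟨(pred_ne_self u).symm, .inr (sub_add_cancel u 1).symm⟩

theorem cycleGraph_degree (hn : 3 ≤ n) (u : ZMod n) : (cycleGraph n).degree u = 2 := by
  rw [SimpleGraph.degree, cycleGraph_neighborFinset hn u, card_pair (add_one_ne_sub_one hn u)]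

theorem majorityProb_cycleGraph (hn : 3 ≤ n) (c : ZMod n → Bool) (u : ZMod n) :
    majorityProb (cycleGraph n) c u = ((c (u + 1)).toNat + (c (u - 1)).toNat) / 2 := by
  rw [majorityProb, cycleGraph_degree hn u, cycleGraph_neighborFinset hn u,
    card_filter_eq_true_eq_sum_toNat, sum_pair (add_one_ne_sub_one hn u)]
  cases c (u + 1) <;> cases c (u - 1) <;> norm_num

theorem sum_majorityProb_cycleGraph (hn : 3 ≤ n) (c : ZMod n → Bool) :
    ∑ u, majorityProb (cycleGraph n) c u = onesCount c := by
  have shift (a : ZMod n) : ∑ u, ((c (u + a)).toNat : ℝ) = ∑ u, ((c u).toNat : ℝ) :=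
    Fintype.sum_equiv (Equiv.addRight a) _ _ fun _ => rfl
  simp only [majorityProb_cycleGraph hn, ← sum_div, sum_add_distrib, sub_eq_add_neg, shift,
    cast_onesCount]
  ring

theorem sum_not_toNat (c : ZMod n → Bool) :
    ∑ u, ((!c u).toNat : ℝ) = n - onesCount c := by
  rw [cast_onesCount, eq_sub_iff_add_eq,
    ← sum_add_distrib, sum_congr rfl fun u _ => show ((!c u).toNat : ℝ) + (c u).toNat = 1 by
      cases c u <;> norm_num]
  simp

/-- The paper's `B i`. -/
def twoOpposite (c : ZMod n → Bool) (i : Bool) : Finset (ZMod n) :=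
  univ.filter (fun v => c v = i ∧ c (v + 1) = !i ∧ c (v - 1) = !i)

/-- The paper's `S i`. -/
def oneOpposite (c : ZMod n → Bool) (i : Bool) : Finset (ZMod n) :=
  univ.filter (fun v => c v = i ∧
    ((c (v + 1) = !i ∧ c (v - 1) = i) ∨ (c (v + 1) = i ∧ c (v - 1) = !i)))

theorem card_twoOpposite_add_half_card_oneOpposite_true (hn : 3 ≤ n) (c : ZMod n → Bool) :
    (#(twoOpposite c true) : ℝ) + #(oneOpposite c true) / 2 =
      ∑ u, (c u).toNat * (1 - majorityProb (cycleGraph n) c u) := by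
  rw [twoOpposite, oneOpposite, natCast_card_filter, natCast_card_filter, sum_div,
    ← sum_add_distrib]
  refine sum_congr rfl fun u _ => ?_
  rw [majorityProb_cycleGraph hn]
  cases c u <;> cases c (u + 1) <;> cases c (u - 1) <;> norm_num

theorem card_twoOpposite_add_half_card_oneOpposite_false (hn : 3 ≤ n) (c : ZMod n → Bool) :
    (#(twoOpposite c false) : ℝ) + #(oneOpposite c false) / 2 =
      ∑ u, (!c u).toNat * majorityProb (cycleGraph n) c u := by
  rw [twoOpposite, oneOpposite, natCast_card_filter, natCast_card_filter, sum_div,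
    ← sum_add_distrib]
  refine sum_congr rfl fun u _ => ?_
  rw [majorityProb_cycleGraph hn]
  cases c u <;> cases c (u + 1) <;> cases c (u - 1) <;> norm_num

theorem sum_stepProb_onesCount_eq_pred (hn : 3 ≤ n) (α : ℝ) (c : ZMod n → Bool) :
    ∑ c' ∈ univ.filter (fun c' : ZMod n → Bool => (onesCount c' : ℤ) = onesCount c - 1),
        stepProb (cycleGraph n) α c c' =
      (1 - α) * (#(twoOpposite c true) + #(oneOpposite c true) / 2) / n := by
  rw [sum_filter_stepProb, card_twoOpposite_add_half_card_oneOpposite_true hn, ZMod.card,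
    mul_sum, mul_sum, sum_div]
  refine sum_congr rfl fun u _ => ?_
  have h₁ := onesCount_update_add c u true
  have h₀ := onesCount_update_add c u false
  cases hu : c u <;> simp only [hu, Bool.toNat_true, Bool.toNat_false] at h₀ h₁ ⊢
  · rw [if_neg (by omega), if_neg (by omega)]
    ring
  · rw [if_neg (by omega), if_pos (by omega)]
    ring

theorem sum_stepProb_onesCount_eq_succ (hn : 3 ≤ n) (α : ℝ) (c : ZMod n → Bool) :
    ∑ c' ∈ univ.filter (fun c' : ZMod n → Bool => onesCount c' = onesCount c + 1),
        stepProb (cycleGraph n) α c c' =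
      α * ((n : ℝ) - onesCount c) / n +
        (1 - α) * (#(twoOpposite c false) + #(oneOpposite c false) / 2) / n := by
  rw [sum_filter_stepProb, card_twoOpposite_add_half_card_oneOpposite_false hn,
    ← sum_not_toNat, ZMod.card, mul_sum, mul_sum, mul_sum, sum_div, sum_div, ← sum_add_distrib]
  refine sum_congr rfl fun u _ => ?_
  have h₁ := onesCount_update_add c u true
  have h₀ := onesCount_update_add c u false
  cases hu : c u <;> simp only [hu, Bool.toNat_true, Bool.toNat_false, Bool.not_true,
    Bool.not_false] at h₀ h₁ ⊢
  · rw [if_pos (by omega), if_neg (by omega)]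
    ring
  · rw [if_neg (by omega), if_neg (by omega)]
    ring

theorem sum_onesCount_mul_stepProb (hn : 3 ≤ n) (α : ℝ) (c : ZMod n → Bool) :
    ∑ c', (onesCount c' : ℝ) * stepProb (cycleGraph n) α c c' =
      onesCount c + α * ((n : ℝ) - onesCount c) / n := by
  have hcount (u : ZMod n) (b : Bool) :
      (onesCount (update c u b) : ℝ) = onesCount c - (c u).toNat + b.toNat := by
    have h := congrArg ((↑) : ℕ → ℝ) (onesCount_update_add c u b)
    push_cast at h
    linarith
  have hstep (u : ZMod n) :
      (onesCount (update c u true) : ℝ) * (α + (1 - α) * majorityProb (cycleGraph n) c u) +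
          onesCount (update c u false) * (1 - (α + (1 - α) * majorityProb (cycleGraph n) c u)) =
        onesCount c - (c u).toNat + (α + (1 - α) * majorityProb (cycleGraph n) c u) := by
    rw [hcount, hcount, Bool.toNat_true, Bool.toNat_false]
    push_cast
    ring
  have hn0 : (n : ℝ) ≠ 0 := NeZero.ne _
  rw [sum_mul_stepProb, ZMod.card, sum_congr rfl fun u _ => hstep u, sum_add_distrib,
    sum_sub_distrib, sum_add_distrib, ← mul_sum, sum_majorityProb_cycleGraph hn,
    ← cast_onesCount]
  simp only [sum_const, card_univ, ZMod.card, nsmul_eq_mul]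
  field_simp
  ring

end Cycle

theorem stmt_17_general (n : ℕ) [NeZero n] (hn : 3 ≤ n)
    (α : ℝ)
    (c : ZMod n → Bool) (k : ℕ) (hk : onesCount c = k)
    (B S : Bool → Finset (ZMod n))
    (hB : ∀ i, B i = univ.filter (fun v => c v = i ∧ c (v + 1) = !i ∧ c (v - 1) = !i))
    (hS : ∀ i, S i = univ.filter (fun v => c v = i ∧
      ((c (v + 1) = !i ∧ c (v - 1) = i) ∨ (c (v + 1) = i ∧ c (v - 1) = !i)))) :
    (∑ c' ∈ univ.filter (fun c' : ZMod n → Bool => (onesCount c' : ℤ) = (k : ℤ) - 1),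
        stepProb (cycleGraph n) α c c'
      = (1 - α) * (((B true).card : ℝ) + (S true).card / 2) / n) ∧
    (∑ c' ∈ univ.filter (fun c' : ZMod n → Bool => onesCount c' = k + 1),
        stepProb (cycleGraph n) α c c'
      = α * ((n : ℝ) - k) / n + (1 - α) * (((B false).card : ℝ) + (S false).card / 2) / n) ∧
    (∑ c' : ZMod n → Bool, (onesCount c' : ℝ) * stepProb (cycleGraph n) α c c'
      = (k : ℝ) + α * ((n : ℝ) - k) / n) := by
  obtain rfl : B = twoOpposite c := funext hB
  obtain rfl : S = oneOpposite c := funext hS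
  subst hk
  exact ⟨sum_stepProb_onesCount_eq_pred hn α c, sum_stepProb_onesCount_eq_succ hn α c,
    sum_onesCount_mul_stepProb hn α c⟩

/-- One-step transition probabilities of the biased majority dynamics on the
cycle from a configuration `c` with `k` ones: the number of ones decreases by
one with probability `(1-α)(|B₁| + |S₁|/2)/n`, increases by one with probability
`α(n-k)/n + (1-α)(|B₀| + |S₀|/2)/n`; consequently the conditional expectation of
the next number of ones is `k + α(n-k)/n`. -/
theorem stmt_17 (n : ℕ) [NeZero n] (hn : 3 ≤ n)
    (α : ℝ) (hα0 : 0 < α) (hα1 : α ≤ 1)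
    (c : ZMod n → Bool) (k : ℕ) (hk : onesCount c = k)
    (B S : Bool → Finset (ZMod n))
    (hB : ∀ i, B i = univ.filter (fun v => c v = i ∧ c (v + 1) = !i ∧ c (v - 1) = !i))
    (hS : ∀ i, S i = univ.filter (fun v => c v = i ∧
      ((c (v + 1) = !i ∧ c (v - 1) = i) ∨ (c (v + 1) = i ∧ c (v - 1) = !i)))) :
    (∑ c' ∈ univ.filter (fun c' : ZMod n → Bool => (onesCount c' : ℤ) = (k : ℤ) - 1),
        stepProb (cycleGraph n) α c c'
      = (1 - α) * (((B true).card : ℝ) + (S true).card / 2) / n) ∧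
    (∑ c' ∈ univ.filter (fun c' : ZMod n → Bool => onesCount c' = k + 1),
        stepProb (cycleGraph n) α c c'
      = α * ((n : ℝ) - k) / n + (1 - α) * (((B false).card : ℝ) + (S false).card / 2) / n) ∧
    (∑ c' : ZMod n → Bool, (onesCount c' : ℝ) * stepProb (cycleGraph n) α c c'
      = (k : ℝ) + α * ((n : ℝ) - k) / n) :=
  stmt_17_general n hn α c k hk B S hB hS
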